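/- arXiv:math/0608457 — 6 statements merged into one kernel-verified Lean document; each statement's English description precedes it below -/
import Mathlib

section
/- Let U_C be the q×q unit upper triangular matrix over A whose (i,j)-entry for i < j is C_{i,j} (with 1's on the diagonal and 0's below), and let U_M be the q×q unit upper triangular matrix whose (i,j)-entry for i < j is −M_{i,j}. Then both products U_C · U_M and U_M · U_C equal the identity matrix I_q (the two claims are independent, since A is noncommutative). -/
open scoped BigOperators

/-- A finite sequence of positive integers is *admissible* if between any two
occurrences of a number `s` there is an entry greater than `s`. -/
def IsAdmissible (l : List ℕ) : Prop :=
  ∀ (l₁ l₂ l₃ : List ℕ) (s : ℕ), l = l₁ ++ s :: (l₂ ++ s :: l₃) → ∃ t ∈ l₂, s < t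

/-- `Dset n` is the set of admissible sequences all of whose entries lie in
`{1, …, n-1}` (including the empty sequence). -/
def Dset (n : ℕ) : Set (List ℕ) :=
  {l | IsAdmissible l ∧ ∀ x ∈ l, 1 ≤ x ∧ x < n}

/-- The product `B i i₁ * B i₁ i₂ * ⋯ * B i_c j` along a sequence `[i₁, …, i_c]`;
the empty sequence contributes `B i j`. -/
def pathProd {A : Type*} [Ring A] (B : ℕ → ℕ → A) (i j : ℕ) : List ℕ → A
  | [] => B i j
  | a :: l => B i a * pathProd B a j l

/-- `M i j = Σ_{(i₁,…,i_c) ∈ D_{min(i,j)}} B i i₁ ⋯ B i_c j`. -/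
noncomputable def Mpoly {A : Type*} [Ring A] (B : ℕ → ℕ → A) (i j : ℕ) : A :=
  ∑ᶠ l ∈ Dset (min i j), pathProd B i j l

/-- `C i j` for `i < j` sums `B i i₁ ⋯ B i_c j` over sequences with
`(i, i₁, …, i_c) ∈ D_j`; and `C n n = M n n`. -/
noncomputable def Cpoly {A : Type*} [Ring A] (B : ℕ → ℕ → A) (i j : ℕ) : A :=
  if i = j then Mpoly B i j
  else ∑ᶠ l ∈ {l : List ℕ | (i :: l) ∈ Dset j}, pathProd B i j l

/-- The generators `B_{i,j}` of the free noncommutative unital ℤ-algebra. -/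
noncomputable def Bgen : ℕ → ℕ → FreeAlgebra ℤ (ℕ × ℕ) :=
  fun i j => FreeAlgebra.ι ℤ (i, j)

/-- The commuting indeterminates `B_{i,j}` of the polynomial ring `ℤ[B_{i,j}]`. -/
noncomputable def Bcomm : ℕ → ℕ → MvPolynomial (ℕ × ℕ) ℤ :=
  fun i j => MvPolynomial.X (i, j)

/-!
Expanding the two products entrywise, both claims reduce to the identities
`C i j = M i j + ∑_{i<k<j} C i k * M k j` and `C i j = M i j + ∑_{i<k<j} M i k * C k j`
for `1 ≤ i < j`. Both come from sorting the sequences `l` with `i :: l ∈ D_j`: by the largest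
entry `k` of `i :: l` for the first, by the first entry `k ≥ i` of `l` for the second. By
admissibility `k = i` happens exactly when all entries of `l` are below `i` (the term `M i j`);
otherwise cutting `l` at that `k` splits it uniquely into a pair of sequences indexing
`C i k * M k j`, respectively `M i k * C k j`. The same cut at the unique largest entry shows
that every `D_n` is finite.
-/

open Finset

namespace IsAdmissible

variable {l : List ℕ}

lemma of_isInfix {l' : List ℕ} (h : IsAdmissible l) (hinf : l' <:+: l) : IsAdmissible l' := by
  obtain ⟨u, v, rfl⟩ := hinf
  intro l₁ l₂ l₃ s hl'
  exact h (u ++ l₁) l₂ (l₃ ++ v) s (by simp [hl'])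

lemma cons {k : ℕ} (hl : IsAdmissible l) (hlt : ∀ x ∈ l, x < k) : IsAdmissible (k :: l) := by
  intro l₁ l₂ l₃ s h
  rcases l₁ with _ | ⟨a, l₁⟩ <;> simp only [List.nil_append, List.cons_append,
    List.cons.injEq] at h
  · obtain ⟨rfl, rfl⟩ := h
    exact absurd (hlt k (by simp)) (lt_irrefl k)
  · exact hl l₁ l₂ l₃ s h.2

lemma append_cons {a b : List ℕ} {k : ℕ} (ha : IsAdmissible a) (hb : IsAdmissible (k :: b))
    (hlt : ∀ x ∈ a, x < k) : IsAdmissible (a ++ k :: b) := by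
  intro l₁ l₂ l₃ s h
  rcases List.append_eq_append_iff.mp h with ⟨u, rfl, hu⟩ | ⟨v, rfl, hv⟩
  · exact hb u l₂ l₃ s hu
  · rcases v with _ | ⟨s', v⟩
    · exact hb [] l₂ l₃ s (by simpa using hv.symm)
    · simp only [List.cons_append, List.cons.injEq] at hv
      obtain ⟨rfl, hv⟩ := hv
      have hsk : s < k := hlt s (by simp)
      rcases List.append_eq_append_iff.mp hv with ⟨w, rfl, hw⟩ | ⟨w, rfl, hw⟩
      · rcases w with _ | ⟨c, w⟩
        · simp only [List.nil_append, List.cons.injEq] at hw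
          exact absurd hw.1 hsk.ne
        · simp only [List.cons_append, List.cons.injEq] at hw
          obtain ⟨rfl, rfl⟩ := hw
          exact ha l₁ l₂ w s (by simp)
      · rcases w with _ | ⟨c, w⟩
        · simp only [List.nil_append, List.cons.injEq] at hw
          exact absurd hw.1 hsk.ne'
        · simp only [List.cons_append, List.cons.injEq] at hw
          obtain ⟨rfl, -⟩ := hw
          exact ⟨k, by simp, hsk⟩

lemma forall_lt_of_forall_le {l₁ l₂ : List ℕ} {k : ℕ} (h : IsAdmissible (l₁ ++ k :: l₂))
    (hle : ∀ x ∈ l₁ ++ k :: l₂, x ≤ k) : (∀ x ∈ l₁, x < k) ∧ ∀ x ∈ l₂, x < k := by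
  have hne : ∀ l₃ l₄ l₅, l₁ ++ k :: l₂ = l₃ ++ k :: (l₄ ++ k :: l₅) → False := by
    intro l₃ l₄ l₅ he
    obtain ⟨t, ht, hkt⟩ := h l₃ l₄ l₅ k he
    exact (hle t (by rw [he]; simp [ht])).not_gt hkt
  refine ⟨fun x hx => (hle x (by simp [hx])).lt_of_ne ?_,
    fun x hx => (hle x (by simp [hx])).lt_of_ne ?_⟩ <;> rintro rfl
  · obtain ⟨a, b, rfl⟩ := List.append_of_mem hx
    exact hne a b l₂ (by simp)
  · obtain ⟨a, b, rfl⟩ := List.append_of_mem hx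
    exact hne l₁ a b rfl

end IsAdmissible

lemma Dset_mono {m n : ℕ} (h : m ≤ n) : Dset m ⊆ Dset n :=
  fun _ hl => ⟨hl.1, fun x hx => ⟨(hl.2 x hx).1, (hl.2 x hx).2.trans_le h⟩⟩

lemma append_cons_mem_Dset_succ_iff {a b : List ℕ} {k : ℕ} (hk : 1 ≤ k) :
    a ++ k :: b ∈ Dset (k + 1) ↔ a ∈ Dset k ∧ b ∈ Dset k := by
  constructor
  · rintro ⟨hadm, hl⟩
    obtain ⟨ha, hb⟩ := hadm.forall_lt_of_forall_le fun x hx => Nat.lt_succ_iff.mp (hl x hx).2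
    exact ⟨⟨hadm.of_isInfix ⟨[], k :: b, by simp⟩, fun x hx => ⟨(hl x (by simp [hx])).1, ha x hx⟩⟩,
      ⟨hadm.of_isInfix ⟨a ++ [k], [], by simp⟩, fun x hx => ⟨(hl x (by simp [hx])).1, hb x hx⟩⟩⟩
  · rintro ⟨⟨ha, ha'⟩, ⟨hb, hb'⟩⟩
    refine ⟨ha.append_cons (hb.cons fun x hx => (hb' x hx).2) fun x hx => (ha' x hx).2, ?_⟩
    simp only [List.mem_append, List.mem_cons]
    rintro x (hx | rfl | hx)
    · exact ⟨(ha' x hx).1, (ha' x hx).2.trans (Nat.lt_succ_self k)⟩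
    · exact ⟨hk, Nat.lt_succ_self x⟩
    · exact ⟨(hb' x hx).1, (hb' x hx).2.trans (Nat.lt_succ_self k)⟩

lemma nil_mem_Dset (n : ℕ) : [] ∈ Dset n :=
  ⟨fun l₁ l₂ l₃ s h => by simp at h, by simp⟩

lemma cons_mem_Dset_succ_iff {i : ℕ} {l : List ℕ} (hi : 1 ≤ i) :
    i :: l ∈ Dset (i + 1) ↔ l ∈ Dset i := by
  simpa [nil_mem_Dset] using append_cons_mem_Dset_succ_iff (a := []) (b := l) hi

lemma cons_append_cons_mem_Dset_iff {a b : List ℕ} {i j k : ℕ} (hi : 1 ≤ i) (hik : i < k)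
    (ha : ∀ x ∈ a, x < i) : i :: (a ++ k :: b) ∈ Dset j ↔ a ∈ Dset i ∧ k :: b ∈ Dset j := by
  constructor
  · rintro ⟨hadm, hl⟩
    exact ⟨⟨hadm.of_isInfix ⟨[i], k :: b, by simp⟩, fun x hx => ⟨(hl x (by simp [hx])).1, ha x hx⟩⟩,
      ⟨hadm.of_isInfix ⟨i :: a, [], by simp⟩, fun x hx => hl x (by simp [hx])⟩⟩
  · rintro ⟨⟨haAdm, ha'⟩, ⟨hb, hb'⟩⟩
    have hkj : k < j := (hb' k (by simp)).2
    refine ⟨(haAdm.cons ha).append_cons hb ?_, ?_⟩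
    · simp only [List.mem_cons]
      rintro x (rfl | hx)
      exacts [hik, (ha x hx).trans hik]
    · simp only [List.mem_cons, List.mem_append]
      rintro x (rfl | hx | hx)
      · exact ⟨hi, hik.trans hkj⟩
      · exact ⟨(ha' x hx).1, ((ha' x hx).2.trans hik).trans hkj⟩
      · exact hb' x (List.mem_cons.mpr hx)

lemma Dset_zero_subset : Dset 0 ⊆ {[]} := by
  rintro (_ | ⟨a, l⟩) ⟨-, hl⟩
  · rfl
  · exact absurd (hl a (by simp)).2 (Nat.not_lt_zero a)

lemma Dset_succ_subset (n : ℕ) :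
    Dset (n + 1) ⊆ Dset n ∪ Set.image2 (fun a b => a ++ n :: b) (Dset n) (Dset n) := by
  intro l hl
  by_cases hn : n ∈ l
  · obtain ⟨l₁, l₂, rfl⟩ := List.append_of_mem hn
    have h := (append_cons_mem_Dset_succ_iff (hl.2 n hn).1).mp hl
    exact Or.inr ⟨l₁, h.1, l₂, h.2, rfl⟩
  · exact Or.inl ⟨hl.1, fun x hx => ⟨(hl.2 x hx).1,
      lt_of_le_of_ne (Nat.lt_succ_iff.mp (hl.2 x hx).2) (ne_of_mem_of_not_mem hx hn)⟩⟩

lemma Dset_finite (n : ℕ) : (Dset n).Finite := by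
  induction n with
  | zero => exact (Set.finite_singleton []).subset Dset_zero_subset
  | succ n ih => exact (ih.union (ih.image2 _ ih)).subset (Dset_succ_subset n)

lemma List.eq_of_append_cons_eq_of_notMem {α : Type*} {a : α} :
    ∀ {x₁ x₂ z₁ z₂ : List α}, x₁ ++ a :: z₁ = x₂ ++ a :: z₂ → a ∉ x₁ → a ∉ x₂ →
      x₁ = x₂ ∧ z₁ = z₂
  | [], [], _, _, h, _, _ => ⟨rfl, by simpa using h⟩
  | [], b :: x₂, _, _, h, _, h₂ => by simp_all
  | b :: x₁, [], _, _, h, h₁, _ => by simp_all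
  | b :: x₁, c :: x₂, _, _, h, h₁, h₂ => by
    simp only [List.cons_append, List.cons.injEq] at h
    obtain ⟨rfl, h⟩ := h
    obtain ⟨rfl, rfl⟩ := eq_of_append_cons_eq_of_notMem h (by simp_all) (by simp_all)
    exact ⟨rfl, rfl⟩

section Sums

variable {A : Type*} [Ring A] (B : ℕ → ℕ → A)

lemma pathProd_append_cons (i j k : ℕ) :
    ∀ l₁ l₂ : List ℕ, pathProd B i j (l₁ ++ k :: l₂) = pathProd B i k l₁ * pathProd B k j l₂
  | [], l₂ => rfl
  | a :: l₁, l₂ => by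
    simp only [List.cons_append, pathProd, pathProd_append_cons a j k l₁ l₂, mul_assoc]

lemma Mpoly_eq_sum {i j : ℕ} (hij : i ≤ j) :
    Mpoly B i j = ∑ l ∈ (Dset_finite i).toFinset, pathProd B i j l := by
  rw [Mpoly, min_eq_left hij, finsum_mem_eq_finite_toFinset_sum]

def Cset (i j : ℕ) : Set (List ℕ) := {l | i :: l ∈ Dset j}

lemma Cset_finite (i j : ℕ) : (Cset i j).Finite :=
  (Dset_finite j).preimage (List.cons_injective.injOn)

lemma Cpoly_eq_sum {i j : ℕ} (hij : i ≠ j) :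
    Cpoly B i j = ∑ l ∈ (Cset_finite i j).toFinset, pathProd B i j l := by
  rw [Cpoly, if_neg hij]
  exact finsum_mem_eq_finite_toFinset_sum _ (Cset_finite i j)

lemma sum_pathProd_eq_mul {S X Y : Finset (List ℕ)} {i j k : ℕ} (hX : ∀ l ∈ X, k ∉ l)
    (hS : ∀ l, l ∈ S ↔ ∃ l₁ ∈ X, ∃ l₂ ∈ Y, l = l₁ ++ k :: l₂) :
    ∑ l ∈ S, pathProd B i j l = (∑ l ∈ X, pathProd B i k l) * ∑ l ∈ Y, pathProd B k j l := by
  have himage : S = (X ×ˢ Y).image fun p => p.1 ++ k :: p.2 := by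
    ext l
    simp [hS, eq_comm, and_assoc]
  have hinj : Set.InjOn (fun p : List ℕ × List ℕ => p.1 ++ k :: p.2) ↑(X ×ˢ Y) := by
    rintro ⟨a₁, a₂⟩ ha ⟨b₁, b₂⟩ hb h
    simp only [coe_product, Set.mem_prod, mem_coe] at ha hb
    obtain ⟨rfl, rfl⟩ := List.eq_of_append_cons_eq_of_notMem h (hX a₁ ha.1) (hX b₁ hb.1)
    rfl
  rw [himage, sum_image hinj, sum_mul_sum, ← sum_product']
  exact sum_congr rfl fun p _ => pathProd_append_cons B i j k p.1 p.2

lemma Cpoly_eq_Mpoly_add_sum_fiber {i j : ℕ} (hij : i < j) (κ : List ℕ → ℕ)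
    (hκ : ∀ l ∈ Cset i j, i ≤ κ l ∧ κ l < j) (hκi : ∀ l, l ∈ Cset i j ∧ κ l = i ↔ l ∈ Dset i) :
    Cpoly B i j = Mpoly B i j + ∑ k ∈ Ioo i j,
      ∑ l ∈ (Cset_finite i j).toFinset with κ l = k, pathProd B i j l := by
  have hmaps : ∀ l ∈ (Cset_finite i j).toFinset, κ l ∈ insert i (Ioo i j) := by
    intro l hl
    have := hκ l ((Set.Finite.mem_toFinset _).mp hl)
    simp only [mem_insert, mem_Ioo]
    omega
  rw [Cpoly_eq_sum B hij.ne, ← sum_fiberwise_of_maps_to hmaps, sum_insert (by simp),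
    Mpoly_eq_sum B hij.le]
  congr 1
  refine sum_congr ?_ fun _ _ => rfl
  ext l
  simp [hκi]

lemma Cpoly_eq_Mpoly_add_sum_Cpoly_mul_Mpoly {i j : ℕ} (hi : 1 ≤ i) (hij : i < j) :
    Cpoly B i j = Mpoly B i j + ∑ k ∈ Ioo i j, Cpoly B i k * Mpoly B k j := by
  have hfiber : ∀ {k l}, k < j → (l ∈ Cset i j ∧ (i :: l).max (List.cons_ne_nil i l) = k ↔
      i :: l ∈ Dset (k + 1) ∧ k ∈ i :: l) := by
    intro k l hkj
    rw [List.max_eq_iff]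
    constructor
    · rintro ⟨⟨hadm, hl⟩, hk, hle⟩
      exact ⟨⟨hadm, fun x hx => ⟨(hl x hx).1, Nat.lt_succ_of_le (hle x hx)⟩⟩, hk⟩
    · rintro ⟨⟨hadm, hl⟩, hk⟩
      have hle : ∀ x ∈ i :: l, x ≤ k := fun x hx => Nat.lt_succ_iff.mp (hl x hx).2
      exact ⟨⟨hadm, fun x hx => ⟨(hl x hx).1, (hle x hx).trans_lt hkj⟩⟩, hk, hle⟩
  rw [Cpoly_eq_Mpoly_add_sum_fiber B hij (fun l => (i :: l).max (List.cons_ne_nil i l))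
    (fun l hl => ⟨List.le_max_of_mem List.mem_cons_self, (hl.2 _ (List.max_mem _)).2⟩)
    (fun l => by rw [hfiber hij, cons_mem_Dset_succ_iff hi, and_iff_left List.mem_cons_self])]
  congr 1
  refine sum_congr rfl fun k hk => ?_
  obtain ⟨hik, hkj⟩ := mem_Ioo.mp hk
  have hk₁ : 1 ≤ k := hi.trans hik.le
  rw [Cpoly_eq_sum B hik.ne, Mpoly_eq_sum B hkj.le]
  refine sum_pathProd_eq_mul B (fun l hl hkl => ?_) fun l => ?_
  · exact lt_irrefl k (((Set.Finite.mem_toFinset _).mp hl).2 k (List.mem_cons_of_mem i hkl)).2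
  simp only [mem_filter, Set.Finite.mem_toFinset, hfiber hkj]
  constructor
  · rintro ⟨hl, hk⟩
    obtain ⟨l₁, l₂, rfl⟩ := List.append_of_mem ((List.mem_cons.mp hk).resolve_left hik.ne')
    obtain ⟨hl₁, hl₂⟩ := (append_cons_mem_Dset_succ_iff (a := i :: l₁) hk₁).mp hl
    exact ⟨l₁, hl₁, l₂, hl₂, rfl⟩
  · rintro ⟨l₁, hl₁, l₂, hl₂, rfl⟩
    exact ⟨(append_cons_mem_Dset_succ_iff (a := i :: l₁) hk₁).mpr ⟨hl₁, hl₂⟩, by simp⟩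

def firstAtLeast (i : ℕ) (l : List ℕ) : ℕ := (l.find? fun x => i ≤ x).getD i

lemma firstAtLeast_eq_iff_of_lt {i k : ℕ} {l : List ℕ} (hik : i < k) :
    firstAtLeast i l = k ↔ ∃ l₁ l₂, l = l₁ ++ k :: l₂ ∧ ∀ x ∈ l₁, x < i := by
  simp [firstAtLeast, Option.getD_eq_iff, hik.ne, List.find?_eq_some_iff_append, hik.le]

lemma firstAtLeast_mem_Ico {i j : ℕ} {l : List ℕ} (hl : l ∈ Cset i j) :
    i ≤ firstAtLeast i l ∧ firstAtLeast i l < j := by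
  rcases h : l.find? fun x => i ≤ x with _ | x
  · simpa [firstAtLeast, h] using (hl.2 i List.mem_cons_self).2
  · simp only [firstAtLeast, h, Option.getD_some]
    exact ⟨by simpa using List.find?_some h, (hl.2 x (List.mem_cons_of_mem i
      (List.mem_of_find?_eq_some h))).2⟩

lemma mem_Cset_and_firstAtLeast_eq_self_iff {i j : ℕ} {l : List ℕ} (hi : 1 ≤ i) (hij : i < j) :
    l ∈ Cset i j ∧ firstAtLeast i l = i ↔ l ∈ Dset i := by
  constructor
  · rintro ⟨hl, hfirst⟩
    have hlt : ∀ x ∈ l, x < i := by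
      rcases h : l.find? fun x => i ≤ x with _ | x
      · simpa using List.find?_eq_none.mp h
      · obtain ⟨-, l₁, l₂, rfl, hl₁⟩ := List.find?_eq_some_iff_append.mp h
        obtain rfl : x = i := by simpa [firstAtLeast, h] using hfirst
        obtain ⟨t, ht, hxt⟩ := hl.1 [] l₁ l₂ x rfl
        exact (lt_asymm hxt (by simpa using hl₁ t ht)).elim
    exact ⟨hl.1.of_isInfix ⟨[i], [], by simp⟩,
      fun x hx => ⟨(hl.2 x (List.mem_cons_of_mem i hx)).1, hlt x hx⟩⟩
  · intro hl
    have hnone : (l.find? fun x => i ≤ x) = none :=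
      List.find?_eq_none.mpr fun x hx => by simpa using (hl.2 x hx).2
    exact ⟨Dset_mono hij ((cons_mem_Dset_succ_iff hi).mpr hl), by simp [firstAtLeast, hnone]⟩

lemma Cpoly_eq_Mpoly_add_sum_Mpoly_mul_Cpoly {i j : ℕ} (hi : 1 ≤ i) (hij : i < j) :
    Cpoly B i j = Mpoly B i j + ∑ k ∈ Ioo i j, Mpoly B i k * Cpoly B k j := by
  rw [Cpoly_eq_Mpoly_add_sum_fiber B hij (firstAtLeast i) (fun _ => firstAtLeast_mem_Ico)
    (fun _ => mem_Cset_and_firstAtLeast_eq_self_iff hi hij)]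
  congr 1
  refine sum_congr rfl fun k hk => ?_
  obtain ⟨hik, hkj⟩ := mem_Ioo.mp hk
  rw [Mpoly_eq_sum B hik.le, Cpoly_eq_sum B hkj.ne]
  refine sum_pathProd_eq_mul B (fun l hl hkl => ?_) fun l => ?_
  · exact lt_asymm hik (((Set.Finite.mem_toFinset _).mp hl).2 k hkl).2
  simp only [mem_filter, Set.Finite.mem_toFinset, firstAtLeast_eq_iff_of_lt hik]
  constructor
  · rintro ⟨hl, l₁, l₂, rfl, hl₁⟩
    obtain ⟨h₁, h₂⟩ := (cons_append_cons_mem_Dset_iff hi hik hl₁).mp hl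
    exact ⟨l₁, h₁, l₂, h₂, rfl⟩
  · rintro ⟨l₁, hl₁, l₂, hl₂, rfl⟩
    have hlt : ∀ x ∈ l₁, x < i := fun x hx => (hl₁.2 x hx).2
    exact ⟨(cons_append_cons_mem_Dset_iff hi hik hlt).mpr ⟨hl₁, hl₂⟩, l₁, l₂, rfl, hlt⟩

end Sums

section UnitUpper

variable {R : Type*} [Semiring R] {q : ℕ}

lemma Fin.sum_Ioo_val_add_one {M : Type*} [AddCommMonoid M] (i j : Fin q) (g : ℕ → M) :
    ∑ k ∈ Ioo i j, g (k + 1) = ∑ m ∈ Ioo ((i : ℕ) + 1) (j + 1), g m := by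
  rw [← map_add_right_Ioo, sum_map, ← Fin.map_valEmbedding_Ioo, sum_map]
  rfl

lemma Matrix.BlockTriangular.mul_apply_eq_sum_Icc {m S : Type*} [Fintype m] [LinearOrder m]
    [LocallyFiniteOrder m] [NonUnitalNonAssocSemiring S] {U V : Matrix m m S}
    (hU : U.BlockTriangular id) (hV : V.BlockTriangular id) (i j : m) :
    (U * V) i j = ∑ k ∈ Icc i j, U i k * V k j := by
  rw [Matrix.mul_apply]
  refine (sum_subset (subset_univ (Icc i j)) fun k _ hk => ?_).symm
  rcases lt_or_ge k i with hki | hik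
  · rw [hU hki, zero_mul]
  · rw [hV (lt_of_not_ge fun hkj => hk (mem_Icc.mpr ⟨hik, hkj⟩)), mul_zero]

/-- Rows and columns are numbered from `0`, the indices of `f` from `1`. -/
def unitUpper (q : ℕ) (f : ℕ → ℕ → R) : Matrix (Fin q) (Fin q) R :=
  Matrix.of fun i j => if (i : ℕ) = j then 1 else if (i : ℕ) < j then f (i + 1) (j + 1) else 0

lemma unitUpper_apply_self (f : ℕ → ℕ → R) (i : Fin q) : unitUpper q f i i = 1 :=
  if_pos rfl

lemma unitUpper_apply_of_lt (f : ℕ → ℕ → R) {i j : Fin q} (h : i < j) :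
    unitUpper q f i j = f (i + 1) (j + 1) :=
  (if_neg (Fin.val_ne_of_ne h.ne)).trans (if_pos h)

lemma unitUpper_blockTriangular (f : ℕ → ℕ → R) : (unitUpper q f).BlockTriangular id :=
  fun _ _ h => (if_neg (Fin.val_ne_of_ne h.ne')).trans (if_neg (lt_asymm h))

lemma unitUpper_mul_unitUpper {f g : ℕ → ℕ → R}
    (h : ∀ i j, 1 ≤ i → i < j → f i j + g i j + ∑ k ∈ Ioo i j, f i k * g k j = 0) :
    unitUpper q f * unitUpper q g = 1 := by
  ext i j
  rw [Matrix.BlockTriangular.mul_apply_eq_sum_Icc (unitUpper_blockTriangular f)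
    (unitUpper_blockTriangular g)]
  rcases lt_trichotomy i j with hij | rfl | hij
  · have hIoo : ∑ k ∈ Ioo i j, unitUpper q f i k * unitUpper q g k j =
        ∑ k ∈ Ioo i j, f (i + 1) (k + 1) * g (k + 1) (j + 1) :=
      sum_congr rfl fun k hk => by
        rw [unitUpper_apply_of_lt f (mem_Ioo.mp hk).1, unitUpper_apply_of_lt g (mem_Ioo.mp hk).2]
    rw [← Ioc_insert_left hij.le, ← Ioo_insert_right hij, sum_insert (by simp [hij.ne]),
      sum_insert (by simp), hIoo, Fin.sum_Ioo_val_add_one i j fun k => f (i + 1) k * g k (j + 1),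
      unitUpper_apply_self, unitUpper_apply_self, unitUpper_apply_of_lt f hij,
      unitUpper_apply_of_lt g hij, one_mul, mul_one, Matrix.one_apply_ne hij.ne,
      ← h (i + 1) (j + 1) (by omega) (by simpa using hij)]
    abel
  · simp [unitUpper_apply_self]
  · simp [Icc_eq_empty_of_lt hij, Matrix.one_apply_ne hij.ne']

end UnitUpper

theorem UC_UM_inverse_general (q : ℕ)
    (UC UM : Matrix (Fin q) (Fin q) (FreeAlgebra ℤ (ℕ × ℕ)))
    (hUC : ∀ i j : Fin q, UC i j =
      if (i : ℕ) = (j : ℕ) then 1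
      else if (i : ℕ) < (j : ℕ) then Cpoly Bgen ((i : ℕ) + 1) ((j : ℕ) + 1) else 0)
    (hUM : ∀ i j : Fin q, UM i j =
      if (i : ℕ) = (j : ℕ) then 1
      else if (i : ℕ) < (j : ℕ) then - Mpoly Bgen ((i : ℕ) + 1) ((j : ℕ) + 1) else 0) :
    UC * UM = 1 ∧ UM * UC = 1 := by
  obtain rfl : UC = unitUpper q (Cpoly Bgen) := Matrix.ext hUC
  obtain rfl : UM = unitUpper q fun i j => -Mpoly Bgen i j := Matrix.ext hUM
  constructor <;> refine unitUpper_mul_unitUpper fun i j hi hij => ?_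
  · rw [Cpoly_eq_Mpoly_add_sum_Cpoly_mul_Mpoly Bgen hi hij]
    simp only [mul_neg, sum_neg_distrib]
    abel
  · rw [Cpoly_eq_Mpoly_add_sum_Mpoly_mul_Cpoly Bgen hi hij]
    simp only [neg_mul, sum_neg_distrib]
    abel

/-- the unit upper triangular matrices with strictly-upper entries
`C_{i,j}` resp. `−M_{i,j}` are two-sided inverses of each other. -/
theorem UC_UM_inverse (q : ℕ) (hq : 1 ≤ q)
    (UC UM : Matrix (Fin q) (Fin q) (FreeAlgebra ℤ (ℕ × ℕ)))
    (hUC : ∀ i j : Fin q, UC i j =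
      if (i : ℕ) = (j : ℕ) then 1
      else if (i : ℕ) < (j : ℕ) then Cpoly Bgen ((i : ℕ) + 1) ((j : ℕ) + 1) else 0)
    (hUM : ∀ i j : Fin q, UM i j =
      if (i : ℕ) = (j : ℕ) then 1
      else if (i : ℕ) < (j : ℕ) then - Mpoly Bgen ((i : ℕ) + 1) ((j : ℕ) + 1) else 0) :
    UC * UM = 1 ∧ UM * UC = 1 :=
  UC_UM_inverse_general q UC UM hUC hUM
end

section
/- Let R be a commutative ring, let λ be a permutation of {1, …, q}, let 1 ≤ i ≤ q−1 and b ∈ R. Then P_λ · E_i(b) = (I_q + b·e_{λ^{-1}(i), λ^{-1}(i+1)}) · P_{τ_i ∘ λ}, where e_{r,s} denotes the q×q matrix whose only nonzero entry is a 1 in position (r,s), and τ_i ∘ λ is the composition applying λ first and then the transposition τ_i. -/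
/-- `Ematrix q R i b` is the `q×q` matrix over `R` agreeing with the identity except
that its `2×2` submatrix in (1-based) rows and columns `i, i+1` is `[[b, 1], [1, 0]]`. -/
def Ematrix (q : ℕ) (R : Type*) [CommRing R] (i : ℕ) (b : R) :
    Matrix (Fin q) (Fin q) R :=
  Matrix.of fun r s =>
    if (r : ℕ) + 1 = i ∧ (s : ℕ) + 1 = i then b
    else if (r : ℕ) + 1 = i ∧ (s : ℕ) + 1 = i + 1 then 1
    else if (r : ℕ) + 1 = i + 1 ∧ (s : ℕ) + 1 = i then 1
    else if (r : ℕ) + 1 = i + 1 ∧ (s : ℕ) + 1 = i + 1 then 0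
    else if r = s then 1 else 0

/-- A positive braid word on `q` strands: a sequence of generator indices `i_k`
with `1 ≤ i_k ≤ q - 1`. -/
def IsBraidWord (q : ℕ) {w : ℕ} (β : Fin w → ℕ) : Prop :=
  ∀ k, 1 ≤ β k ∧ β k + 1 ≤ q

/-- The path matrix `B_β(b₁, …, b_w) = E_{i₁}(b₁) ⋯ E_{i_w}(b_w)`. -/
def pathMatrix (q : ℕ) (R : Type*) [CommRing R] {w : ℕ}
    (β : Fin w → ℕ) (b : Fin w → R) : Matrix (Fin q) (Fin q) R :=
  (List.ofFn fun k : Fin w => Ematrix q R (β k) (b k)).prod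

/-- The underlying permutation `π = τ_{i_w} ∘ ⋯ ∘ τ_{i_1}` of a braid word. -/
def braidPerm {w : ℕ} (β : Fin w → ℕ) : Equiv.Perm ℕ :=
  ((List.ofFn fun k : Fin w => Equiv.swap (β k) (β k + 1)).reverse).prod

/-- The permutation matrix `P_σ = [δ_{σ(i),j}]` (1-based indices). -/
def permMatrix (q : ℕ) (R : Type*) [CommRing R] (σ : Equiv.Perm ℕ) :
    Matrix (Fin q) (Fin q) R :=
  Matrix.of fun r s => if σ ((r : ℕ) + 1) = (s : ℕ) + 1 then 1 else 0

/-- The `(i,j)` entry of a `q×q` matrix, with 1-based indices `1 ≤ i, j ≤ q`. -/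
def entry1 {q : ℕ} {R : Type*} [Zero R] (M : Matrix (Fin q) (Fin q) R) (i j : ℕ) : R :=
  if h : i - 1 < q ∧ j - 1 < q then M ⟨i - 1, h.1⟩ ⟨j - 1, h.2⟩ else 0

/-- The upper-left `n×n` submatrix of a `q×q` matrix. -/
def principalMinor {q : ℕ} {R : Type*} [Zero R]
    (M : Matrix (Fin q) (Fin q) R) (n : ℕ) : Matrix (Fin n) (Fin n) R :=
  Matrix.of fun i j => entry1 M ((i : ℕ) + 1) ((j : ℕ) + 1)

/-- `e_{r,s}` scaled by `b`: the `q×q` matrix whose only possibly nonzero entry is `b`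
in (1-based) position `(r, s)`. -/
def stdE (q : ℕ) (R : Type*) [CommRing R] (r s : ℕ) (b : R) :
    Matrix (Fin q) (Fin q) R :=
  Matrix.of fun x y => if (x : ℕ) + 1 = r ∧ (y : ℕ) + 1 = s then b else 0

/-! `E_i(b) = P_{τ_i} + b e_{i,i}`. Left multiplication by `P_λ` composes the permutations and
moves the row of `e_{i,i}` to `λ⁻¹(i)`; on the right-hand side, `P_{τ_i ∘ λ}` carries row `λ⁻¹(i+1)`
to column `τ_i(i+1) = i`, so both sides equal `P_{τ_i ∘ λ} + b e_{λ⁻¹(i), i}`. -/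

def FixesOutside (q : ℕ) (σ : Equiv.Perm ℕ) : Prop :=
  ∀ x : ℕ, ¬(1 ≤ x ∧ x ≤ q) → σ x = x

theorem FixesOutside.inv {q : ℕ} {σ : Equiv.Perm ℕ} (hσ : FixesOutside q σ) :
    FixesOutside q σ⁻¹ :=
  fun x hx => Equiv.Perm.inv_eq_iff_eq.mpr (hσ x hx).symm

theorem FixesOutside.exists_apply_eq_succ {q : ℕ} {σ : Equiv.Perm ℕ} (hσ : FixesOutside q σ)
    (x : ℕ) (hx : 1 ≤ x ∧ x ≤ q) : ∃ t : Fin q, σ x = t + 1 := by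
  have hσx : 1 ≤ σ x ∧ σ x ≤ q := by
    by_contra h
    rw [σ.injective (hσ _ h)] at h
    exact h hx
  exact ⟨⟨σ x - 1, by omega⟩, (Nat.sub_add_cancel hσx.1).symm⟩

section PermMatrixAlgebra

variable {q : ℕ} {R : Type*} [CommRing R]

theorem permMatrix_mul_apply {σ : Equiv.Perm ℕ} {r t : Fin q} (h : σ (r + 1) = t + 1)
    (M : Matrix (Fin q) (Fin q) R) (s : Fin q) :
    (permMatrix q R σ * M) r s = M t s := by
  simp [Matrix.mul_apply, permMatrix, h, Fin.val_inj]

theorem permMatrix_mul_permMatrix {σ : Equiv.Perm ℕ} (hσ : FixesOutside q σ)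
    (ρ : Equiv.Perm ℕ) :
    permMatrix q R σ * permMatrix q R ρ = permMatrix q R (ρ * σ) := by
  ext r s
  obtain ⟨t, ht⟩ := hσ.exists_apply_eq_succ (r + 1) (by omega)
  rw [permMatrix_mul_apply ht]
  simp [permMatrix, ht]

theorem permMatrix_mul_stdE {σ : Equiv.Perm ℕ} (hσ : FixesOutside q σ) (a c : ℕ) (b : R) :
    permMatrix q R σ * stdE q R a c b = stdE q R (σ⁻¹ a) c b := by
  ext r s
  obtain ⟨t, ht⟩ := hσ.exists_apply_eq_succ (r + 1) (by omega)
  rw [permMatrix_mul_apply ht]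
  simp only [stdE, Matrix.of_apply, ← ht, Equiv.Perm.eq_inv_iff_eq]

theorem stdE_mul_permMatrix (σ : Equiv.Perm ℕ) (a : ℕ) (c : Fin q) (b : R) :
    stdE q R a (c + 1) b * permMatrix q R σ = stdE q R a (σ (c + 1)) b := by
  ext r s
  rw [Matrix.mul_apply, Finset.sum_eq_single c]
  · simp only [stdE, permMatrix, Matrix.of_apply, and_true, eq_comm (a := (s : ℕ) + 1)]
    split_ifs <;> simp_all
  · intro t _ htc
    simp [stdE, Fin.val_inj, htc]
  · simp

theorem Ematrix_eq_permMatrix_add_stdE (i : ℕ) (b : R) :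
    Ematrix q R i b = permMatrix q R (Equiv.swap i (i + 1)) + stdE q R i i b := by
  ext r s
  simp only [Ematrix, permMatrix, stdE, Matrix.add_apply, Matrix.of_apply, Equiv.swap_apply_def,
    Fin.ext_iff]
  split_ifs <;> first | (exfalso; omega) | simp

end PermMatrixAlgebra

theorem permMatrix_mul_Ematrix_general (q : ℕ) (R : Type*) [CommRing R]
    (lam : Equiv.Perm ℕ) (hlam : ∀ x : ℕ, ¬(1 ≤ x ∧ x ≤ q) → lam x = x)
    (i : ℕ) (hi' : i + 1 ≤ q) (b : R) :
    permMatrix q R lam * Ematrix q R i b =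
      (1 + stdE q R (lam⁻¹ i) (lam⁻¹ (i + 1)) b) *
        permMatrix q R (Equiv.swap i (i + 1) * lam) := by
  have hlam : FixesOutside q lam := hlam
  obtain ⟨t, ht⟩ := hlam.inv.exists_apply_eq_succ (i + 1) (by omega)
  calc permMatrix q R lam * Ematrix q R i b
      = permMatrix q R (Equiv.swap i (i + 1) * lam) + stdE q R (lam⁻¹ i) i b := by
        rw [Ematrix_eq_permMatrix_add_stdE, mul_add, permMatrix_mul_permMatrix hlam,
          permMatrix_mul_stdE hlam]
    _ = (1 + stdE q R (lam⁻¹ i) (lam⁻¹ (i + 1)) b) *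
          permMatrix q R (Equiv.swap i (i + 1) * lam) := by
        rw [add_mul, one_mul, ht, stdE_mul_permMatrix, ← ht]
        simp

/-- `P_λ · E_i(b) = (I_q + b·e_{λ⁻¹(i), λ⁻¹(i+1)}) · P_{τ_i ∘ λ}`. -/
theorem permMatrix_mul_Ematrix (q : ℕ) (R : Type*) [CommRing R]
    (lam : Equiv.Perm ℕ) (hlam : ∀ x : ℕ, ¬(1 ≤ x ∧ x ≤ q) → lam x = x)
    (i : ℕ) (hi : 1 ≤ i) (hi' : i + 1 ≤ q) (b : R) :
    permMatrix q R lam * Ematrix q R i b =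
      (1 + stdE q R (lam⁻¹ i) (lam⁻¹ (i + 1)) b) *
        permMatrix q R (Equiv.swap i (i + 1) * lam) :=
  permMatrix_mul_Ematrix_general q R lam hlam i hi' b
end

section
/- Let β = (i_1, …, i_w) be a positive braid word on q strands with underlying permutation π and partial permutations π_k = τ_{i_k} ∘ ⋯ ∘ τ_{i_1} (π_0 = id). Assume β is a permutation braid word, i.e. the unordered pairs {π_{k−1}^{-1}(i_k), π_{k−1}^{-1}(i_k+1)} for k = 1, …, w are pairwise distinct (every pair of strands crosses at most once). Then for any commutative ring R and any labels b_1, …, b_w ∈ R, the path matrix B = B_β(b_1, …, b_w) satisfies B_{i,π(i)} = 1 for every i, and B_{i,j} = 0 whenever j > π(i) or i > π^{-1}(j). -/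
/-! Induct along the word. Right multiplication by `E_t(c)` replaces columns `t, t+1` by
`col_{t+1} + c • col_t` and `col_t`, so if the prefix product `B_k` has its pivots `1` at
`(i, π_k i)` with zeros to their right and below, then so does `B_k E_t(c)` for
`π_{k+1} = τ_t π_k`, provided the pivot of column `t` lies above the pivot of column `t+1`,
i.e. `π_k⁻¹ t < π_k⁻¹ (t+1)`. This holds because the two strands about to cross at step `k`
only change their relative order when they cross each other, which they have not done before
step `k` in a permutation braid. -/

open Equiv Set

section Entries

variable {q : ℕ} {R : Type*} [CommRing R]

lemma entry1_of_mem (M : Matrix (Fin q) (Fin q) R) {i j : ℕ} (hi : 1 ≤ i) (hiq : i ≤ q)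
    (hj : 1 ≤ j) (hjq : j ≤ q) :
    entry1 M i j = M ⟨i - 1, by omega⟩ ⟨j - 1, by omega⟩ :=
  dif_pos ⟨by omega, by omega⟩

lemma entry1_one {i j : ℕ} (hi : 1 ≤ i) (hiq : i ≤ q) (hj : 1 ≤ j) (hjq : j ≤ q) :
    entry1 (1 : Matrix (Fin q) (Fin q) R) i j = if i = j then 1 else 0 := by
  rw [entry1_of_mem _ hi hiq hj hjq, Matrix.one_apply]
  congr 1
  simp only [Fin.ext_iff, eq_iff_iff]
  omega

lemma Ematrix_apply {t : ℕ} (ht : 1 ≤ t) (htq : t + 1 ≤ q) (c : R) (x s : Fin q) :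
    Ematrix q R t c x s =
      if (s : ℕ) + 1 = t then
        (if x = ⟨t - 1, by omega⟩ then c else 0) + (if x = ⟨t, by omega⟩ then 1 else 0)
      else if (s : ℕ) = t then (if x = ⟨t - 1, by omega⟩ then 1 else 0)
      else if x = s then 1 else 0 := by
  simp only [Ematrix, Matrix.of_apply, Fin.ext_iff]
  split_ifs <;> first | omega | simp

lemma entry1_mul_Ematrix (M : Matrix (Fin q) (Fin q) R) {t : ℕ} (ht : 1 ≤ t) (htq : t + 1 ≤ q)
    (c : R) {i j : ℕ} (hi : 1 ≤ i) (hiq : i ≤ q) (hj : 1 ≤ j) (hjq : j ≤ q) :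
    entry1 (M * Ematrix q R t c) i j =
      if j = t then entry1 M i (t + 1) + entry1 M i t * c
      else if j = t + 1 then entry1 M i t
      else entry1 M i j := by
  simp only [entry1_of_mem _ hi hiq hj hjq, entry1_of_mem _ hi hiq ht (by omega : t ≤ q),
    entry1_of_mem _ hi hiq (by omega : 1 ≤ t + 1) htq, Matrix.mul_apply, Ematrix_apply ht htq]
  by_cases h1 : j = t
  · simp only [h1, Nat.sub_add_cancel ht, ↓reduceIte, mul_add, mul_ite, mul_zero, mul_one,
      Finset.sum_add_distrib, Finset.sum_ite_eq', Finset.mem_univ, add_tsub_cancel_right]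
    exact add_comm _ _
  by_cases h2 : j = t + 1
  · simp [h2]
  · simp [h1, h2, show ¬ j - 1 + 1 = t by omega, show j - 1 ≠ t by omega]
end Entries

structure IsPermTriangular {q : ℕ} {R : Type*} [Zero R] [One R]
    (M : Matrix (Fin q) (Fin q) R) (σ : Perm ℕ) : Prop where
  pivot : ∀ i, 1 ≤ i → i ≤ q → entry1 M i (σ i) = 1
  eq_zero : ∀ i j, 1 ≤ i → i ≤ q → 1 ≤ j → j ≤ q → (σ i < j ∨ σ⁻¹ j < i) →
    entry1 M i j = 0

namespace IsPermTriangular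

variable {q : ℕ} {R : Type*} [CommRing R]

lemma one : IsPermTriangular (1 : Matrix (Fin q) (Fin q) R) 1 where
  pivot i hi hiq := by simp [entry1_one hi hiq hi hiq]
  eq_zero i j hi hiq hj hjq hij := by
    rw [entry1_one hi hiq hj hjq, if_neg]
    simp only [Perm.one_apply, inv_one] at hij
    omega

lemma mul_Ematrix {M : Matrix (Fin q) (Fin q) R} {σ : Perm ℕ} (hM : IsPermTriangular M σ)
    (hσ : MapsTo σ (Icc 1 q) (Icc 1 q)) {t : ℕ} (ht : 1 ≤ t) (htq : t + 1 ≤ q)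
    (hlt : σ⁻¹ t < σ⁻¹ (t + 1)) (c : R) :
    IsPermTriangular (M * Ematrix q R t c) (swap t (t + 1) * σ) where
  pivot i hi hiq := by
    obtain ⟨hs, hsq⟩ := hσ ⟨hi, hiq⟩
    rw [Perm.mul_apply, swap_apply_def]
    split_ifs with h1 h2
    · rw [entry1_mul_Ematrix M ht htq c hi hiq (by omega) htq, if_neg (by omega), if_pos rfl,
        ← h1, hM.pivot i hi hiq]
    · have hci : σ⁻¹ (t + 1) = i := Perm.inv_eq_iff_eq.2 h2.symm
      rw [entry1_mul_Ematrix M ht htq c hi hiq ht (by omega), if_pos rfl, ← h2,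
        hM.pivot i hi hiq, hM.eq_zero i t hi hiq ht (by omega) (Or.inr (by omega)), zero_mul,
        add_zero]
    · rw [entry1_mul_Ematrix M ht htq c hi hiq hs hsq, if_neg h1, if_neg h2, hM.pivot i hi hiq]
  eq_zero i j hi hiq hj hjq hij := by
    have hzero : ∀ j, 1 ≤ j → j ≤ q → σ i < j ∨ σ⁻¹ j < i → entry1 M i j = 0 :=
      fun j hj hjq ↦ hM.eq_zero i j hi hiq hj hjq
    have hrow_t : σ i ≠ t ∨ σ⁻¹ t = i :=
      or_iff_not_imp_left.2 fun h ↦ Perm.inv_eq_iff_eq.2 (not_not.1 h).symm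
    have hrow_succ : σ i ≠ t + 1 ∨ σ⁻¹ (t + 1) = i :=
      or_iff_not_imp_left.2 fun h ↦ Perm.inv_eq_iff_eq.2 (not_not.1 h).symm
    rw [entry1_mul_Ematrix M ht htq c hi hiq hj hjq]
    simp only [Perm.mul_apply, mul_inv_rev, swap_inv, swap_apply_def] at hij
    split_ifs at hij ⊢
    all_goals first
      | exact hzero _ hj hjq (by omega)
      | exact hzero t ht (by omega) (by omega)
      | rw [hzero t ht (by omega) (by omega), hzero (t + 1) (by omega) htq (by omega)]; ring

end IsPermTriangular

lemma swap_succ_lt_swap_succ {t x y : ℕ} (hxy : x < y) (h : ¬(x = t ∧ y = t + 1)) :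
    swap t (t + 1) x < swap t (t + 1) y := by
  simp only [swap_apply_def]
  split_ifs <;> omega

lemma mapsTo_list_prod {α : Type*} {s : Set α} (l : List (Perm α))
    (h : ∀ σ ∈ l, MapsTo σ s s) : MapsTo l.prod s s := by
  induction l with
  | nil => exact mapsTo_id s
  | cons σ l ih =>
    rw [List.prod_cons, Perm.coe_mul]
    exact (h σ List.mem_cons_self).comp (ih fun τ hτ ↦ h τ (List.mem_cons_of_mem σ hτ))

lemma List.take_ofFn_succ {α : Type*} {w : ℕ} (f : Fin w → α) (k : Fin w) :
    (List.ofFn f).take (k + 1) = (List.ofFn f).take k ++ [f k] := by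
  simp [List.take_add_one]

section PrefixPerm

variable {w : ℕ} (β : Fin w → ℕ)

def prefixPerm (k : ℕ) : Perm ℕ :=
  (((List.ofFn fun j : Fin w ↦ swap (β j) (β j + 1)).take k).reverse).prod

/-- The strands, labelled by their starting positions, that cross at the `k`-th letter. -/
def crossingPair (k : Fin w) : Finset ℕ :=
  {(prefixPerm β k)⁻¹ (β k), (prefixPerm β k)⁻¹ (β k + 1)}

def IsPermutationBraid : Prop :=
  Function.Injective (crossingPair β)

variable {β}

@[simp]
lemma prefixPerm_zero : prefixPerm β 0 = 1 := by
  simp [prefixPerm]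

lemma prefixPerm_succ (k : Fin w) :
    prefixPerm β (k + 1) = swap (β k) (β k + 1) * prefixPerm β k := by
  simp [prefixPerm, List.take_ofFn_succ]

lemma mapsTo_prefixPerm {q : ℕ} (hβ : IsBraidWord q β) (k : ℕ) :
    MapsTo (prefixPerm β k) (Icc 1 q) (Icc 1 q) := by
  refine mapsTo_list_prod _ fun σ hσ ↦ ?_
  obtain ⟨j, rfl⟩ := List.mem_ofFn.1 (List.take_subset _ _ (List.mem_reverse.1 hσ))
  intro x hx
  have := hβ j
  simp only [mem_Icc, swap_apply_def] at hx ⊢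
  split_ifs <;> omega

lemma prefixPerm_lt_prefixPerm {a c : ℕ} (hac : a < c) {k : ℕ} (hk : k ≤ w)
    (h : ∀ j : Fin w, (j : ℕ) < k → crossingPair β j ≠ {a, c}) :
    prefixPerm β k a < prefixPerm β k c := by
  induction k with
  | zero => simpa using hac
  | succ k ih =>
    set j : Fin w := ⟨k, hk⟩
    rw [show k + 1 = j + 1 from rfl, prefixPerm_succ, Perm.mul_apply, Perm.mul_apply]
    refine swap_succ_lt_swap_succ (ih (k.le_succ.trans hk) fun i hi ↦ h i (by omega)) ?_
    rintro ⟨ha, hc⟩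
    refine h j k.lt_succ_self ?_
    rw [crossingPair, Perm.inv_eq_iff_eq.2 ha.symm, Perm.inv_eq_iff_eq.2 hc.symm]

lemma IsPermutationBraid.prefixPerm_inv_lt (hβ : IsPermutationBraid β) (k : Fin w) :
    (prefixPerm β k)⁻¹ (β k) < (prefixPerm β k)⁻¹ (β k + 1) := by
  set σ := prefixPerm β k
  have hne : σ⁻¹ (β k) ≠ σ⁻¹ (β k + 1) := fun h ↦ by simpa using σ⁻¹.injective h
  refine lt_of_le_of_ne (not_lt.1 fun hlt ↦ ?_) hne
  have := prefixPerm_lt_prefixPerm hlt k.is_lt.le fun j hj hjk ↦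
    (Fin.ne_of_lt hj) (hβ (hjk.trans (Finset.pair_comm _ _)))
  simp [σ] at this

end PrefixPerm

theorem isPermTriangular_prefix {q : ℕ} {R : Type*} [CommRing R] {w : ℕ} {β : Fin w → ℕ}
    (hβ : IsBraidWord q β) (hperm : IsPermutationBraid β) (b : Fin w → R) {k : ℕ}
    (hk : k ≤ w) :
    IsPermTriangular ((List.ofFn fun j ↦ Ematrix q R (β j) (b j)).take k).prod
      (prefixPerm β k) := by
  induction k with
  | zero => simpa using IsPermTriangular.one
  | succ k ih =>
    set j : Fin w := ⟨k, hk⟩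
    rw [show k + 1 = j + 1 from rfl, List.take_ofFn_succ, List.prod_append, List.prod_singleton,
      prefixPerm_succ]
    exact (ih (k.le_succ.trans hk)).mul_Ematrix (mapsTo_prefixPerm hβ k) (hβ j).1 (hβ j).2
      (hperm.prefixPerm_inv_lt j) (b j)

/-- for a permutation braid word (every pair of strands crosses at most
once), the path matrix has `B_{i,π(i)} = 1`, and `B_{i,j} = 0` whenever `j > π(i)` or
`i > π⁻¹(j)`. -/
theorem pathMatrix_permutation_braid (q : ℕ) (R : Type*) [CommRing R] {w : ℕ}
    (β : Fin w → ℕ) (hβ : IsBraidWord q β) (b : Fin w → R)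
    (πp : ℕ → Equiv.Perm ℕ)
    (hπp : ∀ k : ℕ, πp k =
      (((List.ofFn fun j : Fin w => Equiv.swap (β j) (β j + 1)).take k).reverse).prod)
    (hperm : ∀ k l : Fin w, k ≠ l →
      ({(πp (k : ℕ))⁻¹ (β k), (πp (k : ℕ))⁻¹ (β k + 1)} : Finset ℕ) ≠
      ({(πp (l : ℕ))⁻¹ (β l), (πp (l : ℕ))⁻¹ (β l + 1)} : Finset ℕ)) :
    (∀ i : ℕ, 1 ≤ i → i ≤ q →
      entry1 (pathMatrix q R β b) i (πp w i) = 1) ∧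
    (∀ i j : ℕ, 1 ≤ i → i ≤ q → 1 ≤ j → j ≤ q →
      (πp w i < j ∨ (πp w)⁻¹ j < i) → entry1 (pathMatrix q R β b) i j = 0) := by
  obtain rfl : πp = prefixPerm β := funext hπp
  have hβperm : IsPermutationBraid β := fun k l hkl ↦ by_contra fun hne ↦ hperm k l hne hkl
  have h := isPermTriangular_prefix hβ hβperm b le_rfl
  rw [List.take_of_length_le (by simp)] at h
  exact ⟨h.pivot, h.eq_zero⟩
end

section
/- Let R be a commutative ring, q ≥ 3 and 1 ≤ i ≤ q−2. Then for all x, y, z ∈ R: E_{i+1}(x) · E_i(y) · E_{i+1}(z) = E_i(z) · E_{i+1}(y − zx) · E_i(x). (This is the effect of the braid relation σ_i σ_{i+1} σ_i = σ_{i+1} σ_i σ_{i+1}, i.e. of a Reidemeister III move, on the path matrix: over a ring of characteristic 2 the middle label changes from y to y + zx.) -/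
/-! Left multiplication by `E_i(b)` is the row operation replacing rows `(rᵢ, rᵢ₊₁)` by
`(b rᵢ + rᵢ₊₁, rᵢ)` and fixing the others. Applied to rows `(u, v, w)` in positions
`i, i+1, i+2`, both sides of the relation produce `(y u + z v + w, x u + v, u)`. -/

namespace Ematrix

variable {q : ℕ} {R : Type*} [CommRing R] {j : ℕ}

-- `Ematrix q R (j + 1)` acts on the 0-based rows `j` and `j + 1`.
theorem row_apply (hj : j + 1 < q) (b : R) (r : Fin q) :
    Ematrix q R (j + 1) b r =
      if (r : ℕ) = j then b • Pi.single ⟨j, by omega⟩ 1 + Pi.single ⟨j + 1, hj⟩ 1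
      else if (r : ℕ) = j + 1 then Pi.single ⟨j, by omega⟩ 1
      else Pi.single r 1 := by
  funext s
  split_ifs <;> simp [Ematrix, Pi.single_apply, Fin.ext_iff] <;> grind

variable (b : R) (M : Matrix (Fin q) (Fin q) R)

theorem mul_row_self (hj : j + 1 < q) :
    (Ematrix q R (j + 1) b * M) ⟨j, by omega⟩ = b • M ⟨j, by omega⟩ + M ⟨j + 1, hj⟩ := by
  rw [Matrix.mul_apply_eq_vecMul, row_apply hj, if_pos rfl, Matrix.add_vecMul,
    Matrix.smul_vecMul, Matrix.single_one_vecMul, Matrix.single_one_vecMul]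
  rfl

theorem mul_row_succ (hj : j + 1 < q) :
    (Ematrix q R (j + 1) b * M) ⟨j + 1, hj⟩ = M ⟨j, by omega⟩ := by
  rw [Matrix.mul_apply_eq_vecMul, row_apply hj, if_neg (by simp), if_pos rfl,
    Matrix.single_one_vecMul]
  rfl

theorem mul_row_of_ne (hj : j + 1 < q) {r : ℕ} (hr : r < q) (hrj : r ≠ j) (hrj' : r ≠ j + 1) :
    (Ematrix q R (j + 1) b * M) ⟨r, hr⟩ = M ⟨r, hr⟩ := by
  rw [Matrix.mul_apply_eq_vecMul, row_apply hj, if_neg hrj, if_neg hrj',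
    Matrix.single_one_vecMul]
  rfl

theorem braid_mul (hj : j + 2 < q) (x y z : R) :
    Ematrix q R (j + 1 + 1) x * (Ematrix q R (j + 1) y * (Ematrix q R (j + 1 + 1) z * M)) =
      Ematrix q R (j + 1) z *
        (Ematrix q R (j + 1 + 1) (y - z * x) * (Ematrix q R (j + 1) x * M)) := by
  funext ⟨r, hr⟩
  obtain rfl | rfl | rfl | ⟨h₀, h₁, h₂⟩ :
      r = j ∨ r = j + 1 ∨ r = j + 1 + 1 ∨ r ≠ j ∧ r ≠ j + 1 ∧ r ≠ j + 1 + 1 := by omega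
  all_goals simp (disch := omega) only [mul_row_self, mul_row_succ, mul_row_of_ne]
  module

end Ematrix

theorem Ematrix_braid_relation_general (q : ℕ) (R : Type*) [CommRing R]
    (i : ℕ) (hi : 1 ≤ i) (hi' : i ≤ q - 2) (x y z : R) :
    Ematrix q R (i + 1) x * Ematrix q R i y * Ematrix q R (i + 1) z =
      Ematrix q R i z * Ematrix q R (i + 1) (y - z * x) * Ematrix q R i x := by
  obtain ⟨j, rfl⟩ := Nat.exists_eq_add_of_le' hi
  simpa only [mul_assoc, mul_one] using Ematrix.braid_mul 1 (by omega : j + 2 < q) x y z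

/-- the effect of the braid relation on the path matrix:
`E_{i+1}(x) · E_i(y) · E_{i+1}(z) = E_i(z) · E_{i+1}(y − zx) · E_i(x)`. -/
theorem Ematrix_braid_relation (q : ℕ) (hq : 3 ≤ q) (R : Type*) [CommRing R]
    (i : ℕ) (hi : 1 ≤ i) (hi' : i ≤ q - 2) (x y z : R) :
    Ematrix q R (i + 1) x * Ematrix q R i y * Ematrix q R (i + 1) z =
      Ematrix q R i z * Ematrix q R (i + 1) (y - z * x) * Ematrix q R i x :=
  Ematrix_braid_relation_general q R i hi hi' x y z
end

section
/- For every integer p ≥ 1, the number of tuples (b_1, …, b_p) ∈ 𝔽₂^p such that the 2×2 matrix B = E_1(b_1) · E_1(b_2) ⋯ E_1(b_p) over 𝔽₂ satisfies B_{1,1} = 1 and det B = 1 equals (2^{p+1} + (−1)^p)/3. -/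
/-!
Over `𝔽₂` each `E₁(b)` has determinant `-1 = 1`, so only `B₁₁ = 1` is a constraint. Splitting off
the first factor, `B₁₁ = b₁ x + y` where `(x, y)` is the first column of `E₁(b₂) ⋯ E₁(b_p)`. That
column is nonzero, so exactly one `b₁` works when `x = 1` and both work when `x = 0`. Hence the
counts satisfy `a_{p+1} = 2^{p+1} - a_p` with `a_0 = 1`, which solves to `3 a_p = 2^{p+1} + (-1)^p`.
-/

section PathMatrix

variable {q : ℕ} {R : Type*} [CommRing R]

@[simp]
lemma pathMatrix_zero (β : Fin 0 → ℕ) (b : Fin 0 → R) : pathMatrix q R β b = 1 := by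
  simp [pathMatrix]

lemma pathMatrix_succ {w : ℕ} (β : Fin (w + 1) → ℕ) (b : Fin (w + 1) → R) :
    pathMatrix q R β b =
      Ematrix q R (β 0) (b 0) * pathMatrix q R (Fin.tail β) (Fin.tail b) := by
  simp [pathMatrix, List.ofFn_succ, Fin.tail]

end PathMatrix

section TwoStrands

variable {R : Type*} [CommRing R]

lemma Ematrix_two_one (v : R) : Ematrix 2 R 1 v = !![v, 1; 1, 0] := by
  ext i j
  fin_cases i <;> fin_cases j <;> rfl

lemma pathMatrix_two_cons {w : ℕ} (v : R) (b : Fin w → R) :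
    pathMatrix 2 R (fun _ => 1) (Fin.cons v b) =
      !![v, 1; 1, 0] * pathMatrix 2 R (fun _ => 1) b := by
  rw [pathMatrix_succ, Ematrix_two_one]
  rfl

lemma det_pathMatrix_two {w : ℕ} (b : Fin w → R) :
    (pathMatrix 2 R (fun _ => 1) b).det = (-1) ^ w := by
  induction w with
  | zero => simp
  | succ w ih =>
    rw [← Fin.cons_self_tail b, pathMatrix_two_cons, Matrix.det_mul, Matrix.det_fin_two_of, ih,
      pow_succ]
    ring

lemma pathMatrix_two_cons_apply_zero_zero {w : ℕ} (v : R) (b : Fin w → R) :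
    pathMatrix 2 R (fun _ => 1) (Fin.cons v b) 0 0 =
      v * pathMatrix 2 R (fun _ => 1) b 0 0 + pathMatrix 2 R (fun _ => 1) b 1 0 := by
  simp [pathMatrix_two_cons, Matrix.mul_apply, Fin.sum_univ_two]

end TwoStrands

lemma det_pathMatrix_two_of_charTwo {R : Type*} [CommRing R] [CharP R 2] {w : ℕ}
    (b : Fin w → R) : (pathMatrix 2 R (fun _ => 1) b).det = 1 := by
  rw [det_pathMatrix_two, CharTwo.neg_eq, one_pow]

lemma Matrix.apply_one_zero_ne_zero_of_det_ne_zero {R : Type*} [CommRing R]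
    {M : Matrix (Fin 2) (Fin 2) R} (hdet : M.det ≠ 0) (h : M 0 0 = 0) : M 1 0 ≠ 0 := by
  contrapose! hdet
  simp [Matrix.det_fin_two, h, hdet]

lemma Fintype.sum_fin_succ_pi {α M : Type*} [Fintype α] [AddCommMonoid M] {n : ℕ}
    (f : (Fin (n + 1) → α) → M) : ∑ b, f b = ∑ t : Fin n → α, ∑ v : α, f (Fin.cons v t) := by
  rw [← (Fin.consEquiv fun _ => α).sum_comp, Fintype.sum_prod_type_right]
  rfl

def augmentationCount (p : ℕ) : ℕ :=
  Fintype.card {b : Fin p → ZMod 2 // pathMatrix 2 (ZMod 2) (fun _ => 1) b 0 0 = 1}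

lemma augmentationCount_eq_sum (p : ℕ) :
    augmentationCount p =
      ∑ b : Fin p → ZMod 2, if pathMatrix 2 (ZMod 2) (fun _ => 1) b 0 0 = 1 then 1 else 0 := by
  rw [augmentationCount, Fintype.card_subtype, Finset.card_filter]

lemma augmentationCount_zero : augmentationCount 0 = 1 := by
  simp [augmentationCount_eq_sum]

lemma sum_ite_mul_add_eq_one (x y : ZMod 2) (h : x = 0 → y ≠ 0) :
    (∑ v : ZMod 2, if v * x + y = 1 then 1 else 0) + (if x = 1 then 1 else 0) = 2 := by
  revert x y
  decide

lemma augmentationCount_succ_add (p : ℕ) :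
    augmentationCount (p + 1) + augmentationCount p = 2 ^ (p + 1) := by
  rw [augmentationCount_eq_sum, augmentationCount_eq_sum, Fintype.sum_fin_succ_pi]
  simp only [pathMatrix_two_cons_apply_zero_zero]
  rw [← Finset.sum_add_distrib]
  trans ∑ _ : Fin p → ZMod 2, 2
  · refine Fintype.sum_congr _ _ fun b => sum_ite_mul_add_eq_one _ _ ?_
    exact Matrix.apply_one_zero_ne_zero_of_det_ne_zero
      (by rw [det_pathMatrix_two_of_charTwo]; exact one_ne_zero)
  · simp [pow_succ]

theorem three_mul_augmentationCount (p : ℕ) :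
    (augmentationCount p : ℤ) * 3 = 2 ^ (p + 1) + (-1) ^ p := by
  induction p with
  | zero => simp [augmentationCount_zero]
  | succ p ih =>
    have h : (augmentationCount (p + 1) + augmentationCount p : ℤ) = 2 ^ (p + 1) := by
      exact_mod_cast augmentationCount_succ_add p
    rw [pow_succ (-1 : ℤ), pow_succ 2 (p + 1)]
    linarith

theorem count_augmentations_two_strands_general (p : ℕ) :
    (Nat.card {b : Fin p → ZMod 2 //
        entry1 (pathMatrix 2 (ZMod 2) (fun _ => 1) b) 1 1 = 1 ∧
        (pathMatrix 2 (ZMod 2) (fun _ => 1) b).det = 1} : ℤ) * 3 =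
      2 ^ (p + 1) + (-1) ^ p := by
  have hiff (b : Fin p → ZMod 2) :
      (entry1 (pathMatrix 2 (ZMod 2) (fun _ => 1) b) 1 1 = 1 ∧
        (pathMatrix 2 (ZMod 2) (fun _ => 1) b).det = 1) ↔
      pathMatrix 2 (ZMod 2) (fun _ => 1) b 0 0 = 1 := by
    rw [and_iff_left (det_pathMatrix_two_of_charTwo b)]
    rfl
  rw [Nat.card_congr (Equiv.subtypeEquivRight hiff), Nat.card_eq_fintype_card]
  exact three_mul_augmentationCount p

/-- the number of augmentations of the `(p,2)` torus link, i.e. of tuples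
`b ∈ 𝔽₂^p` with `B_{1,1} = 1` and `det B = 1` for `B = E₁(b₁)⋯E₁(b_p)`, equals
`(2^{p+1} + (−1)^p)/3`. -/
theorem count_augmentations_two_strands (p : ℕ) (hp : 1 ≤ p) :
    (Nat.card {b : Fin p → ZMod 2 //
        entry1 (pathMatrix 2 (ZMod 2) (fun _ => 1) b) 1 1 = 1 ∧
        (pathMatrix 2 (ZMod 2) (fun _ => 1) b).det = 1} : ℤ) * 3 =
      2 ^ (p + 1) + (-1) ^ p :=
  count_augmentations_two_strands_general p
end

section
/- For every positive braid word β = (i_1, …, i_w) on q strands, the number of tuples b = (b_1, …, b_w) ∈ 𝔽₂^w such that for every 1 ≤ n ≤ q the determinant of the upper-left n×n submatrix of B_β(b_1, …, b_w) equals 1 is odd. -/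
/-!
Over `𝔽₂` the product `D(M)` of the leading principal minors of `M` is the indicator of
"every leading principal minor equals `1`", so the number to compute is `∑_b D(B_β(b))` mod 2.
Multiplying `M` on the right by `E_i(b)` only changes the minors of size `≠ i` by a sign
(a column operation followed by a column swap), and makes the `i`-th minor affine in `b` with slope
the old `i`-th minor. Hence `D(M E_i(b)) = b D(M) + c`, whose sum over `b ∈ 𝔽₂` is `D(M)`.
Peeling the letters off `β` one at a time gives `∑_b D(B_β(b)) = D(1) = 1`.
-/

section

open Matrix

variable {R : Type*} [CommRing R] {q : ℕ}

lemma principalMinor_eq_submatrix (M : Matrix (Fin q) (Fin q) R) {n : ℕ} (hn : n ≤ q) :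
    principalMinor M n = M.submatrix (Fin.castLE hn) (Fin.castLE hn) := by
  ext r s
  have h : (r : ℕ) + 1 - 1 < q ∧ (s : ℕ) + 1 - 1 < q := by omega
  simp only [principalMinor, entry1, of_apply, dif_pos h]
  rfl

lemma mul_Ematrix_apply (M : Matrix (Fin q) (Fin q) R) {j : ℕ} (hj : j + 1 < q)
    (b : R) (r s : Fin q) :
    (M * Ematrix q R (j + 1) b) r s =
      if (s : ℕ) = j then b * M r ⟨j, by omega⟩ + M r ⟨j + 1, hj⟩
      else if (s : ℕ) = j + 1 then M r ⟨j, by omega⟩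
      else M r s := by
  set j₀ : Fin q := ⟨j, by omega⟩
  set j₁ : Fin q := ⟨j + 1, hj⟩
  have hcol : ∀ t : Fin q, Ematrix q R (j + 1) b t s =
      if s = j₀ then (if t = j₀ then b else 0) + (if t = j₁ then 1 else 0)
      else if s = j₁ then (if t = j₀ then 1 else 0)
      else if t = s then 1 else 0 := by
    intro t
    simp only [Ematrix, of_apply, Fin.ext_iff, j₀, j₁]
    split_ifs <;> first | ring1 | omega
  have hs₀ : (s : ℕ) = j ↔ s = j₀ := by simp [Fin.ext_iff, j₀]
  have hs₁ : (s : ℕ) = j + 1 ↔ s = j₁ := by simp [Fin.ext_iff, j₁]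
  simp only [mul_apply, hcol, hs₀, hs₁]
  split_ifs <;> simp [mul_add, Finset.sum_add_distrib, mul_comm]

lemma mul_Ematrix_eq_updateCol (M : Matrix (Fin q) (Fin q) R) {j : ℕ} (hj : j + 1 < q)
    (b : R) :
    M * Ematrix q R (j + 1) b =
      (M.updateCol ⟨j + 1, hj⟩ fun r => M r ⟨j, by omega⟩).updateCol ⟨j, by omega⟩
        fun r => b * M r ⟨j, by omega⟩ + M r ⟨j + 1, hj⟩ := by
  ext r s
  rw [mul_Ematrix_apply M hj]
  simp only [updateCol_apply, Fin.ext_iff]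

lemma det_mul_Ematrix (M : Matrix (Fin q) (Fin q) R) {j : ℕ} (hj : j + 1 < q) (b : R) :
    (M * Ematrix q R (j + 1) b).det = -M.det := by
  set j₀ : Fin q := ⟨j, by omega⟩
  set j₁ : Fin q := ⟨j + 1, hj⟩
  have hne : j₀ ≠ j₁ := by simp [j₀, j₁, Fin.ext_iff]
  have hcol : (fun r => b * M r j₀ + M r j₁) = b • (fun r => M r j₀) + fun r => M r j₁ := by
    funext r; simp
  have hrepeat : ((M.updateCol j₁ fun r => M r j₀).updateCol j₀ fun r => M r j₀).det = 0 :=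
    det_zero_of_column_eq hne fun r => by simp [hne.symm]
  have hswap : ((M.updateCol j₁ fun r => M r j₀).updateCol j₀ fun r => M r j₁) =
      M.submatrix id (Equiv.swap j₀ j₁) := by
    ext r s
    by_cases h₀ : s = j₀
    · subst h₀; simp
    by_cases h₁ : s = j₁
    · subst h₁; simp [hne.symm]
    simp [h₀, h₁, Equiv.swap_apply_of_ne_of_ne h₀ h₁]
  rw [mul_Ematrix_eq_updateCol M hj, hcol, det_updateCol_add, det_updateCol_smul, hrepeat,
    hswap, det_permute', Equiv.Perm.sign_swap hne]
  simp

lemma principalMinor_mul_Ematrix_of_le (M : Matrix (Fin q) (Fin q) R) {j : ℕ} (hj : j + 1 < q)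
    (b : R) {n : ℕ} (hn : n ≤ j) :
    principalMinor (M * Ematrix q R (j + 1) b) n = principalMinor M n := by
  ext r s
  rw [principalMinor_eq_submatrix _ (by omega), principalMinor_eq_submatrix _ (by omega),
    submatrix_apply, submatrix_apply, mul_Ematrix_apply M hj, if_neg (by simp; omega),
    if_neg (by simp; omega)]

lemma principalMinor_mul_Ematrix_of_lt (M : Matrix (Fin q) (Fin q) R) {j : ℕ} (hj : j + 1 < q)
    (b : R) {n : ℕ} (hjn : j + 1 < n) (hn : n ≤ q) :
    principalMinor (M * Ematrix q R (j + 1) b) n = principalMinor M n * Ematrix n R (j + 1) b := by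
  ext r s
  rw [mul_Ematrix_apply _ hjn]
  simp only [principalMinor_eq_submatrix _ hn, submatrix_apply, mul_Ematrix_apply M hj]
  rfl

lemma principalMinor_mul_Ematrix_self (M : Matrix (Fin q) (Fin q) R) {j : ℕ} (hj : j + 1 < q)
    (b : R) :
    principalMinor (M * Ematrix q R (j + 1) b) (j + 1) =
      (principalMinor M (j + 1)).updateCol (Fin.last j)
        (b • (fun r => principalMinor M (j + 1) r (Fin.last j)) +
          fun r => M (Fin.castLE hj.le r) ⟨j + 1, hj⟩) := by
  ext r s
  simp only [principalMinor_eq_submatrix _ hj.le, submatrix_apply, mul_Ematrix_apply M hj,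
    updateCol_apply, Fin.ext_iff, Fin.val_castLE, Fin.val_last]
  split_ifs <;> first | rfl | omega

lemma det_principalMinor_mul_Ematrix_self (M : Matrix (Fin q) (Fin q) R) {j : ℕ}
    (hj : j + 1 < q) (b : R) :
    (principalMinor (M * Ematrix q R (j + 1) b) (j + 1)).det =
      b * (principalMinor M (j + 1)).det +
        ((principalMinor M (j + 1)).updateCol (Fin.last j)
          fun r => M (Fin.castLE hj.le r) ⟨j + 1, hj⟩).det := by
  rw [principalMinor_mul_Ematrix_self M hj, det_updateCol_add, det_updateCol_smul,
    updateCol_eq_self]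

def leadingMinorsProd (M : Matrix (Fin q) (Fin q) R) : R :=
  ∏ n ∈ Finset.Icc 1 q, (principalMinor M n).det

lemma leadingMinorsProd_one :
    leadingMinorsProd (1 : Matrix (Fin q) (Fin q) R) = 1 := by
  refine Finset.prod_eq_one fun n hn => ?_
  rw [principalMinor_eq_submatrix _ (Finset.mem_Icc.mp hn).2,
    submatrix_one _ (Fin.castLE_injective _), det_one]

lemma exists_leadingMinorsProd_mul_Ematrix [CharP R 2]
    (M : Matrix (Fin q) (Fin q) R) {j : ℕ} (hj : j + 1 < q) :
    ∃ c, ∀ b, leadingMinorsProd (M * Ematrix q R (j + 1) b) = b * leadingMinorsProd M + c := by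
  have hmem : j + 1 ∈ Finset.Icc 1 q := Finset.mem_Icc.mpr ⟨by omega, by omega⟩
  have hminor_ne : ∀ b, ∀ n ∈ (Finset.Icc 1 q).erase (j + 1),
      (principalMinor (M * Ematrix q R (j + 1) b) n).det = (principalMinor M n).det := by
    intro b n hn
    obtain ⟨hne, hn⟩ := Finset.mem_erase.mp hn
    rcases Nat.lt_or_gt_of_ne hne with hlt | hgt
    · rw [principalMinor_mul_Ematrix_of_le M hj b (by omega)]
    · rw [principalMinor_mul_Ematrix_of_lt M hj b hgt (Finset.mem_Icc.mp hn).2,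
        det_mul_Ematrix _ hgt, CharTwo.neg_eq]
  refine ⟨((principalMinor M (j + 1)).updateCol (Fin.last j)
      fun r => M (Fin.castLE hj.le r) ⟨j + 1, hj⟩).det *
    ∏ n ∈ (Finset.Icc 1 q).erase (j + 1), (principalMinor M n).det, fun b => ?_⟩
  simp only [leadingMinorsProd, ← Finset.mul_prod_erase _ _ hmem,
    Finset.prod_congr rfl (hminor_ne b), det_principalMinor_mul_Ematrix_self M hj]
  ring

lemma sum_zmod_two_mul_add (a c : ZMod 2) : ∑ b : ZMod 2, (b * a + c) = a := by
  revert a c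
  decide

lemma sum_leadingMinorsProd_mul_Ematrix (M : Matrix (Fin q) (Fin q) (ZMod 2)) {i : ℕ}
    (hi : 1 ≤ i) (hiq : i + 1 ≤ q) :
    ∑ b : ZMod 2, leadingMinorsProd (M * Ematrix q (ZMod 2) i b) = leadingMinorsProd M := by
  obtain ⟨j, rfl⟩ : ∃ j, i = j + 1 := ⟨i - 1, by omega⟩
  obtain ⟨c, hc⟩ := exists_leadingMinorsProd_mul_Ematrix M (show j + 1 < q by omega)
  simp only [hc, sum_zmod_two_mul_add]

lemma pathMatrix_cons {w : ℕ} (β : Fin (w + 1) → ℕ) (x : R) (b : Fin w → R) :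
    pathMatrix q R β (Fin.cons x b) =
      Ematrix q R (β 0) x * pathMatrix q R (Fin.tail β) b := by
  simp [pathMatrix, List.ofFn_succ, Fin.tail]

lemma sum_leadingMinorsProd_mul_pathMatrix (M : Matrix (Fin q) (Fin q) (ZMod 2)) {w : ℕ}
    (β : Fin w → ℕ) (hβ : IsBraidWord q β) :
    ∑ b, leadingMinorsProd (M * pathMatrix q (ZMod 2) β b) = leadingMinorsProd M := by
  induction w generalizing M with
  | zero => simp [pathMatrix]
  | succ w ih =>
    rw [← (Fin.consEquiv fun _ => ZMod 2).sum_comp, Fintype.sum_prod_type]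
    simp only [Fin.consEquiv, Equiv.coe_fn_mk, pathMatrix_cons, ← mul_assoc,
      ih _ (Fin.tail β) fun k => hβ k.succ]
    exact sum_leadingMinorsProd_mul_Ematrix M (hβ 0).1 (hβ 0).2

lemma Finset.prod_zmod_two_eq_ite {ι : Type*} (s : Finset ι) (f : ι → ZMod 2) :
    ∏ i ∈ s, f i = if ∀ i ∈ s, f i = 1 then 1 else 0 := by
  split_ifs with h
  · exact Finset.prod_eq_one h
  · obtain ⟨i, hi, hfi⟩ : ∃ i ∈ s, f i ≠ 1 := by simpa using h
    have ne_one_imp_eq_zero : ∀ x : ZMod 2, x ≠ 1 → x = 0 := by decide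
    exact Finset.prod_eq_zero hi (ne_one_imp_eq_zero _ hfi)

lemma leadingMinorsProd_zmod_two_eq_ite (M : Matrix (Fin q) (Fin q) (ZMod 2)) :
    leadingMinorsProd M =
      if ∀ n : ℕ, 1 ≤ n → n ≤ q → (principalMinor M n).det = 1 then 1 else 0 := by
  simp only [leadingMinorsProd, Finset.prod_zmod_two_eq_ite, Finset.mem_Icc, and_imp]

end

theorem odd_card_augmentations_general (q : ℕ) {w : ℕ}
    (β : Fin w → ℕ) (hβ : IsBraidWord q β) :
    Odd (Nat.card {b : Fin w → ZMod 2 //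
      ∀ n : ℕ, 1 ≤ n → n ≤ q →
        (principalMinor (pathMatrix q (ZMod 2) β b) n).det = 1}) := by
  rw [← ZMod.natCast_eq_one_iff_odd, Nat.card_eq_fintype_card, Fintype.card_subtype,
    ← Finset.sum_boole]
  calc ∑ b, (if ∀ n : ℕ, 1 ≤ n → n ≤ q →
          (principalMinor (pathMatrix q (ZMod 2) β b) n).det = 1 then 1 else 0)
      = ∑ b, leadingMinorsProd (1 * pathMatrix q (ZMod 2) β b) := by
        simp only [one_mul, leadingMinorsProd_zmod_two_eq_ite]
    _ = 1 := by
        rw [sum_leadingMinorsProd_mul_pathMatrix 1 β hβ, leadingMinorsProd_one]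

/-- the number of augmentations of `γ_β`, i.e. of tuples `b ∈ 𝔽₂^w`
for which all leading principal minors of the path matrix equal `1`, is odd. -/
theorem odd_card_augmentations (q : ℕ) (hq : 1 ≤ q) {w : ℕ}
    (β : Fin w → ℕ) (hβ : IsBraidWord q β) :
    Odd (Nat.card {b : Fin w → ZMod 2 //
      ∀ n : ℕ, 1 ≤ n → n ≤ q →
        (principalMinor (pathMatrix q (ZMod 2) β b) n).det = 1}) :=
  odd_card_augmentations_general q β hβ
end
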